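/- arXiv:2104.06938 — 3 statements merged into one kernel-verified Lean document; each statement's English description precedes it below -/
import Mathlib

section
/- For all b ∈ [0,1], the partial transpose of the Horodecki 3-qubit state σ^(b) with respect to the first qubit is positive semidefinite. -/
noncomputable section

open scoped BigOperators ComplexOrder

abbrev Q3 := Fin 2 × Fin 2 × Fin 2

/-- lexicographic encoding of the 3-qubit basis -/
def enc (x : Q3) : Fin 8 :=
  ⟨4 * x.1.val + 2 * x.2.1.val + x.2.2.val, by
    have h1 := x.1.isLt; have h2 := x.2.1.isLt; have h3 := x.2.2.isLt; omega⟩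

/-- the 8×8 matrix M of the Horodecki construction -/
noncomputable def Mmat (b : ℝ) : Matrix (Fin 8) (Fin 8) ℂ :=
  !![(b:ℂ), 0, 0, 0, 0, (b:ℂ), 0, 0;
     0, (b:ℂ), 0, 0, 0, 0, (b:ℂ), 0;
     0, 0, (b:ℂ), 0, 0, 0, 0, (b:ℂ);
     0, 0, 0, (b:ℂ), 0, 0, 0, 0;
     0, 0, 0, 0, (((1+b)/2 : ℝ) : ℂ), 0, 0, ((Real.sqrt (1-b^2)/2 : ℝ) : ℂ);
     (b:ℂ), 0, 0, 0, 0, (b:ℂ), 0, 0;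
     0, (b:ℂ), 0, 0, 0, 0, (b:ℂ), 0;
     0, 0, (b:ℂ), 0, ((Real.sqrt (1-b^2)/2 : ℝ) : ℂ), 0, 0, (((1+b)/2 : ℝ) : ℂ)]

/-- the Horodecki 3-qubit state σ^(b), as an 8×8 matrix -/
noncomputable def sigma8 (b : ℝ) : Matrix (Fin 8) (Fin 8) ℂ :=
  (((7*b+1 : ℝ) : ℂ))⁻¹ • Mmat b

/-- σ^(b) viewed as an operator on ℂ²⊗ℂ²⊗ℂ² -/
noncomputable def sigma (b : ℝ) : Matrix Q3 Q3 ℂ :=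
  Matrix.of fun x y => sigma8 b (enc x) (enc y)

/-- partial transpose with respect to the first qubit -/
def ptA (ρ : Matrix Q3 Q3 ℂ) : Matrix Q3 Q3 ℂ :=
  Matrix.of fun x y => ρ (y.1, x.2) (x.1, y.2)

/-- partial transpose with respect to the second qubit -/
def ptB (ρ : Matrix Q3 Q3 ℂ) : Matrix Q3 Q3 ℂ :=
  Matrix.of fun x y => ρ (x.1, y.2.1, x.2.2) (y.1, x.2.1, y.2.2)

/-- partial transpose with respect to the third qubit -/
def ptC (ρ : Matrix Q3 Q3 ℂ) : Matrix Q3 Q3 ℂ :=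
  Matrix.of fun x y => ρ (x.1, x.2.1, y.2.2) (y.1, y.2.1, x.2.2)

/-- cyclic relabeling of the three qubits (A→B, B→C, C→A on party roles) -/
def cyc (ρ : Matrix Q3 Q3 ℂ) : Matrix Q3 Q3 ℂ :=
  Matrix.of fun x y => ρ (x.2.1, x.2.2, x.1) (y.2.1, y.2.2, y.1)

/-- the party-symmetrized state η^(b) -/
noncomputable def etaState (b : ℝ) : Matrix Q3 Q3 ℂ :=
  (3 : ℂ)⁻¹ • (sigma b + cyc (sigma b) + cyc (cyc (sigma b)))


/-!
In the lexicographic basis `e₀, …, e₇` (indexed from 0), partial transposition moves the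
off-diagonal entries `b` of `M` from `(eₖ, eₖ₊₅)` to `(eₖ₊₁, eₖ₊₄)`, so `M^{T_A}` is the direct sum of `b` on `e₀`, the rank-one blocks
`b (eₖ + eₖ₊₃)(eₖ + eₖ₊₃)*` for `k = 2, 3`, and on `e₁, e₄, e₇` the block
`b (e₁ + e₄)(e₁ + e₄)* + w w*` with `w = √((1-b)/2) e₄ + √((1+b)/2) e₇`.
Hence `M^{T_A}` is a Gram matrix `Fᴴ F`, and `σ^{T_A} = (7b+1)⁻¹ Fᴴ F` is positive semidefinite.
-/

open Matrix

lemma sqrt_half_sub_mul_sqrt_half_add (b : ℝ) :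
    √((1 - b) / 2) * √((1 + b) / 2) = √(1 - b ^ 2) / 2 := by
  rcases le_total b 1 with hb | hb
  · rw [← Real.sqrt_mul (by linarith), show (1 - b) / 2 * ((1 + b) / 2) = (1 - b ^ 2) / 2 ^ 2 by ring,
      Real.sqrt_div' _ (by positivity), Real.sqrt_sq zero_le_two]
  · rw [Real.sqrt_eq_zero'.mpr (by linarith : (1 - b) / 2 ≤ 0),
      Real.sqrt_eq_zero'.mpr (by nlinarith : 1 - b ^ 2 ≤ 0)]
    simp

def ptAGramFactor (b : ℝ) : Matrix (Fin 5) (Fin 8) ℂ :=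
  !![(√b : ℂ), 0, 0, 0, 0, 0, 0, 0;
     0, (√b : ℂ), 0, 0, (√b : ℂ), 0, 0, 0;
     0, 0, (√b : ℂ), 0, 0, (√b : ℂ), 0, 0;
     0, 0, 0, (√b : ℂ), 0, 0, (√b : ℂ), 0;
     0, 0, 0, 0, (√((1 - b) / 2) : ℂ), 0, 0, (√((1 + b) / 2) : ℂ)]

theorem ptA_sigma_eq_gram {b : ℝ} (hb0 : 0 ≤ b) (hb1 : b ≤ 1) :
    ptA (sigma b) =
      ((7 * b + 1)⁻¹ • ((ptAGramFactor b)ᴴ * ptAGramFactor b)).submatrix enc enc := by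
  have hb : (√b : ℂ) * √b = b := by exact_mod_cast Real.mul_self_sqrt hb0
  have hm : (√((1 - b) / 2) : ℂ) * √((1 - b) / 2) = (1 - b) / 2 := by
    exact_mod_cast Real.mul_self_sqrt (by linarith)
  have hp : (√((1 + b) / 2) : ℂ) * √((1 + b) / 2) = (1 + b) / 2 := by
    exact_mod_cast Real.mul_self_sqrt (by linarith)
  have hmp : (√((1 - b) / 2) : ℂ) * √((1 + b) / 2) = ((√(1 - b ^ 2) / 2 : ℝ) : ℂ) := by
    exact_mod_cast sqrt_half_sub_mul_sqrt_half_add b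
  have hpm : (√((1 + b) / 2) : ℂ) * √((1 - b) / 2) = ((√(1 - b ^ 2) / 2 : ℝ) : ℂ) := by
    rw [mul_comm, hmp]
  ext ⟨i, j, k⟩ ⟨i', j', k'⟩
  fin_cases i <;> fin_cases j <;> fin_cases k <;> fin_cases i' <;> fin_cases j' <;> fin_cases k' <;>
    simp [ptA, sigma, sigma8, Mmat, enc, ptAGramFactor, mul_apply, Fin.sum_univ_five,
      hb, hm, hp, hmp, hpm, -Real.sqrt_div']
  all_goals ring

theorem sigma_ppt_A (b : ℝ) (hb0 : 0 ≤ b) (hb1 : b ≤ 1) :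
    (ptA (sigma b)).PosSemidef := by
  rw [ptA_sigma_eq_gram hb0 hb1]
  exact ((posSemidef_conjTranspose_mul_self _).smul (by positivity)).submatrix enc
end
end

section
/- For b ∈ (0,1), the Horodecki state σ^(b) is NPT across the bipartition B|CA: its partial transpose with respect to the second qubit has a negative eigenvalue. -/
noncomputable section

open scoped BigOperators ComplexOrder

namespace Matrix.PosSemidef

variable {𝕜 n : Type*} [RCLike 𝕜] [Fintype n] [DecidableEq n]

-- The hypothesis says that the quadratic form vanishes at `eᵢ - eⱼ`, so `A` kills that vector.
theorem col_eq_of_diag_add_diag_eq {A : Matrix n n 𝕜} (hA : A.PosSemidef) {i j : n}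
    (h : A i i + A j j = A i j + A j i) (k : n) : A k i = A k j := by
  set v : n → 𝕜 := Pi.single i 1 - Pi.single j 1
  have hv : A *ᵥ v = 0 := by
    refine (hA.dotProduct_mulVec_zero_iff v).mp ?_
    simp only [v, mulVec_sub, mulVec_single_one, star_sub, Pi.star_single, star_one,
      sub_dotProduct, single_one_dotProduct, col_apply, Pi.sub_apply]
    linear_combination h
  simpa [v, mulVec_sub, sub_eq_zero] using congr_fun hv k

end Matrix.PosSemidef

theorem sigma_npt_B (b : ℝ) (hb0 : 0 < b) (hb1 : b < 1) :
    ¬ (ptB (sigma b)).PosSemidef := by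
  intro h
  -- On `|000⟩, |101⟩` the matrix `ptB (sigma b)` is `b / (7b+1)` times the all-ones block,
  -- while in those two columns the row `|110⟩` reads `0` and `√(1-b²) / (2(7b+1))`.
  have hcol := h.col_eq_of_diag_add_diag_eq (i := (0, 0, 0)) (j := (1, 0, 1)) rfl (1, 1, 0)
  change ((7 * b + 1 : ℝ) : ℂ)⁻¹ * 0 = ((7 * b + 1 : ℝ) : ℂ)⁻¹ * ((√(1 - b ^ 2) / 2 : ℝ) : ℂ)
    at hcol
  have hnorm : ((7 * b + 1 : ℝ) : ℂ)⁻¹ ≠ 0 := by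
    have : 7 * b + 1 ≠ 0 := by positivity
    exact inv_ne_zero (by exact_mod_cast this)
  have hoff : √(1 - b ^ 2) / 2 ≠ 0 := (div_pos (Real.sqrt_pos.mpr (by nlinarith)) two_pos).ne'
  exact hoff (by exact_mod_cast (mul_left_cancel₀ hnorm hcol).symm)
end
end

section
/- For b ∈ [0,1], the matrix ρ^[2](b) = (3+21b)/(3+17b) · h^(b) is positive semidefinite with trace 1, where h^(b) = η^(b) − μ(v₁v₁ᵀ+v₂v₂ᵀ) + ν(v₃v₄ᵀ+v₄v₃ᵀ) + ε(v₅v₆ᵀ+v₆v₅ᵀ). -/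
noncomputable section

open scoped BigOperators ComplexOrder

/-- standard basis vector e_{n+1} of ℂ⁸ viewed on the 3-qubit index set -/
def stdv (n : Fin 8) : Q3 → ℂ := fun x => if enc x = n then 1 else 0

/-- the operator h^(b) -/
noncomputable def hOp (b : ℝ) : Matrix Q3 Q3 ℂ :=
  etaState b
    - ((b / (3*(1+7*b)) : ℝ) : ℂ) •
        (Matrix.vecMulVec (stdv 1 + stdv 6) (stdv 1 + stdv 6)
          + Matrix.vecMulVec (stdv 2 + stdv 5) (stdv 2 + stdv 5))
    + (((1+3*b) / (6+42*b) : ℝ) : ℂ) •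
        (Matrix.vecMulVec (stdv 1) (stdv 2) + Matrix.vecMulVec (stdv 2) (stdv 1))
    + ((2*b / (3*(1+7*b)) : ℝ) : ℂ) •
        (Matrix.vecMulVec (stdv 6) (stdv 5) + Matrix.vecMulVec (stdv 5) (stdv 6))

/-- the state ρ^[2](b) -/
noncomputable def rho2 (b : ℝ) : Matrix Q3 Q3 ℂ :=
  (((3+21*b) / (3+17*b) : ℝ) : ℂ) • hOp b

/-!
After clearing the common denominator `3 (1 + 7b)`, the operator `h^(b)` is a matrix with
entries polynomial in `b` and `s = √(1 - b²)`, and it is a nonnegative combination of rank-one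
projections `v vᵀ` onto real vectors. All coefficients but the last are visibly nonnegative; the
last one, a Schur complement, is
`3(1+b)/2 - (2b+s)²/(1+3b) = (1 + 12b + 3b² - 8bs)/(2(1+3b))`, nonnegative since `s ≤ 1`.
For the trace, `η^(b)` has trace `1`, the `μ`-term removes `4μ` and the `ν`- and `ε`-terms are
traceless, so `tr h^(b) = (3 + 17b)/(3 + 21b)`.
-/

open Matrix

theorem Matrix.posSemidef_vecMulVec_self_of_star_eq {n R : Type*} [Finite n] [Ring R]
    [PartialOrder R] [StarRing R] [StarOrderedRing R] {v : n → R} (hv : star v = v) :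
    (vecMulVec v v).PosSemidef := by
  simpa only [hv] using posSemidef_vecMulVec_self_star v

lemma star_stdv (n : Fin 8) : star (stdv n) = stdv n := by
  ext x; by_cases h : enc x = n <;> simp [stdv, h]

lemma enc_bijective : Function.Bijective enc := by
  rw [Fintype.bijective_iff_injective_and_card]; exact ⟨by decide, rfl⟩

lemma sum_comp_enc {M : Type*} [AddCommMonoid M] (f : Fin 8 → M) : ∑ x, f (enc x) = ∑ n, f n :=
  enc_bijective.sum_comp f

lemma stdv_dotProduct_stdv (m n : Fin 8) : stdv m ⬝ᵥ stdv n = if m = n then 1 else 0 :=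
  (sum_comp_enc fun k => (if k = m then (1 : ℂ) else 0) * if k = n then 1 else 0).trans
    (by simp [eq_comm])

section Trace

lemma trace_cyc (ρ : Matrix Q3 Q3 ℂ) : (cyc ρ).trace = ρ.trace := by
  simp only [trace, diag, cyc, of_apply, Fintype.sum_prod_type, Fin.sum_univ_two]; ring

lemma trace_Mmat (b : ℝ) : (Mmat b).trace = ((1 + 7 * b : ℝ) : ℂ) := by
  simp only [trace, diag, Fin.sum_univ_eight, Mmat, of_apply, cons_val', cons_val, empty_val',
    cons_val_fin_one, cons_val_zero, cons_val_one]
  push_cast; ring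

variable {b : ℝ} (hb : 1 + 7 * b ≠ 0)
include hb

lemma trace_sigma : (sigma b).trace = 1 := by
  have hb' : ((7 * b + 1 : ℝ) : ℂ) ≠ 0 := by rw [add_comm]; exact_mod_cast hb
  calc (sigma b).trace = (sigma8 b).trace := sum_comp_enc fun n => sigma8 b n n
    _ = 1 := by rw [sigma8, trace_smul, trace_Mmat, smul_eq_mul, add_comm (1 : ℝ),
      inv_mul_cancel₀ hb']

lemma trace_etaState : (etaState b).trace = 1 := by
  simp only [etaState, trace_smul, trace_add, trace_cyc, trace_sigma hb]
  norm_num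

lemma trace_hOp : (hOp b).trace = 1 - 4 * ((b / (3 * (1 + 7 * b)) : ℝ) : ℂ) := by
  simp only [hOp, trace_add, trace_sub, trace_smul, trace_vecMulVec, trace_etaState hb,
    add_dotProduct, dotProduct_add, stdv_dotProduct_stdv]
  norm_num [Fin.ext_iff]
  ring

end Trace

noncomputable def hOpScaled (b : ℝ) : Matrix Q3 Q3 ℂ :=
  let M : Matrix Q3 Q3 ℂ := of fun x y => Mmat b (enc x) (enc y)
  M + cyc M + cyc (cyc M)
    - (b : ℂ) • (vecMulVec (stdv 1 + stdv 6) (stdv 1 + stdv 6)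
        + vecMulVec (stdv 2 + stdv 5) (stdv 2 + stdv 5))
    + (((1 + 3 * b) / 2 : ℝ) : ℂ) • (vecMulVec (stdv 1) (stdv 2) + vecMulVec (stdv 2) (stdv 1))
    + ((2 * b : ℝ) : ℂ) • (vecMulVec (stdv 6) (stdv 5) + vecMulVec (stdv 5) (stdv 6))

lemma hOp_eq_smul_hOpScaled {b : ℝ} (h7 : 1 + 7 * b ≠ 0) :
    hOp b = ((3 * (1 + 7 * b) : ℝ) : ℂ)⁻¹ • hOpScaled b := by
  have h7' : (1 + 7 * b : ℂ) ≠ 0 := by exact_mod_cast h7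
  ext x y
  simp only [hOp, hOpScaled, etaState, sigma, sigma8, cyc, of_apply, Matrix.add_apply,
    Matrix.sub_apply, Matrix.smul_apply, smul_eq_mul]
  rw [show (6 + 42 * b : ℝ) = 6 * (1 + 7 * b) by ring]
  push_cast
  rw [add_comm (7 * (b : ℂ))]
  field_simp
  ring

noncomputable def sosVecA (b : ℝ) : Q3 → ℂ :=
  (((1 + 3 * b) / 2 : ℝ) : ℂ) • stdv 4 + (((2 * b + √(1 - b ^ 2)) / 2 : ℝ) : ℂ) • stdv 7

noncomputable def sosVecB (b : ℝ) : Q3 → ℂ :=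
  (((1 + 3 * b) / 2 : ℝ) : ℂ) • (stdv 1 + stdv 2) + (((2 * b + √(1 - b ^ 2)) / 2 : ℝ) : ℂ) • stdv 7

noncomputable def hOpScaledSOS (b : ℝ) : Matrix Q3 Q3 ℂ :=
  (b : ℂ) • (vecMulVec (stdv 0 + stdv 3) (stdv 0 + stdv 3)
      + vecMulVec (stdv 0 + stdv 5 + stdv 6) (stdv 0 + stdv 5 + stdv 6)
      + vecMulVec (stdv 3 + stdv 4) (stdv 3 + stdv 4) + vecMulVec (stdv 0) (stdv 0)
      + vecMulVec (stdv 3) (stdv 3) + vecMulVec (stdv 5 + stdv 6) (stdv 5 + stdv 6))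
    + ((2 / (1 + 3 * b) : ℝ) : ℂ) • (vecMulVec (sosVecA b) (sosVecA b)
      + vecMulVec (sosVecB b) (sosVecB b))
    + ((3 * (1 + b) / 2 - (2 * b + √(1 - b ^ 2)) ^ 2 / (1 + 3 * b) : ℝ) : ℂ) •
      vecMulVec (stdv 7) (stdv 7)

set_option maxHeartbeats 2000000 in
lemma hOpScaled_eq_hOpScaledSOS {b : ℝ} (h3 : 1 + 3 * b ≠ 0) : hOpScaled b = hOpScaledSOS b := by
  -- the denominator in the normal form `field_simp` puts it in
  have h3' : (1 + b * 3 : ℂ) ≠ 0 := by rw [mul_comm]; exact_mod_cast h3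
  ext ⟨x1, x2, x3⟩ ⟨y1, y2, y3⟩
  fin_cases x1 <;> fin_cases x2 <;> fin_cases x3 <;>
    fin_cases y1 <;> fin_cases y2 <;> fin_cases y3 <;>
  · simp [hOpScaled, hOpScaledSOS, sosVecA, sosVecB, cyc, Mmat, stdv, enc, vecMulVec_apply]
    try field_simp
    try ring

lemma sq_two_mul_add_sqrt_div_le {b : ℝ} (hb0 : 0 ≤ b) (hb1 : b ≤ 1) :
    (2 * b + √(1 - b ^ 2)) ^ 2 / (1 + 3 * b) ≤ 3 * (1 + b) / 2 := by
  have hs0 : 0 ≤ √(1 - b ^ 2) := Real.sqrt_nonneg _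
  have hsq : √(1 - b ^ 2) ^ 2 = 1 - b ^ 2 := Real.sq_sqrt (by nlinarith)
  have hs1 : √(1 - b ^ 2) ≤ 1 := by nlinarith
  rw [div_le_iff₀ (by linarith)]
  nlinarith

lemma hOpScaledSOS_posSemidef {b : ℝ} (hb0 : 0 ≤ b) (hb1 : b ≤ 1) :
    (hOpScaledSOS b).PosSemidef := by
  have real_nonneg {r : ℝ} (hr : 0 ≤ r) : (0 : ℂ) ≤ r := Complex.zero_le_real.mpr hr
  have psd {v : Q3 → ℂ} (hv : star v = v) := posSemidef_vecMulVec_self_of_star_eq hv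
  refine ((((((psd ?_).add (psd ?_)).add (psd ?_)).add (psd ?_)).add (psd ?_)).add (psd ?_)
    |>.smul (real_nonneg hb0)).add (((psd ?_).add (psd ?_)).smul (real_nonneg ?_))
    |>.add ((psd (star_stdv 7)).smul (real_nonneg ?_))
  all_goals first
    | positivity
    | linarith [sq_two_mul_add_sqrt_div_le hb0 hb1]
    | simp [star_stdv, sosVecA, sosVecB]

lemma hOp_posSemidef {b : ℝ} (hb0 : 0 ≤ b) (hb1 : b ≤ 1) : (hOp b).PosSemidef := by
  rw [hOp_eq_smul_hOpScaled (by linarith), hOpScaled_eq_hOpScaledSOS (by linarith)]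
  exact (hOpScaledSOS_posSemidef hb0 hb1).smul
    (by rw [← Complex.ofReal_inv]; exact Complex.zero_le_real.mpr (by positivity))

theorem rho2_is_density (b : ℝ) (hb0 : 0 ≤ b) (hb1 : b ≤ 1) :
    (rho2 b).PosSemidef ∧ (rho2 b).trace = 1 := by
  refine ⟨(hOp_posSemidef hb0 hb1).smul (Complex.zero_le_real.mpr (by positivity)), ?_⟩
  have h7 : 1 + 7 * b ≠ 0 := by linarith
  have h17 : 3 + 17 * b ≠ 0 := by linarith
  rw [rho2, trace_smul, trace_hOp h7, smul_eq_mul]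
  exact_mod_cast (show (3 + 21 * b) / (3 + 17 * b) * (1 - 4 * (b / (3 * (1 + 7 * b)))) = 1 by
    field_simp; ring)
end
end
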